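/- Let V be a k-vector space and R = T_kV. Define I : R ⊗ V ⊗ R → R ⊗ R by I((v_1⋯v_{p−1}) ⊗ v_p ⊗ (v_{p+1}⋯v_m)) = (v_1⋯v_p)⊗(v_{p+1}⋯v_m) − (v_1⋯v_{p−1})⊗(v_p⋯v_m). Then I is an injective R-bimodule map whose image is the kernel Ω¹R of the multiplication map μ : R⊗R → R, and for every r ∈ R, I(dr) = r⊗1 − 1⊗r, where d : R → R⊗V⊗R is defined by d(v_1⋯v_m) = ∑_{i=1}^m (v_1⋯v_{i−1}) ⊗ v_i ⊗ (v_{i+1}⋯v_m). -/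

import Mathlib

open TensorProduct

/-- The monomial `v₁ ⊗ ⋯ ⊗ vₙ` in the tensor algebra. -/
noncomputable def prodGen (k : Type*) [Field k] (V : Type*) [AddCommGroup V]
    [Module k V] (l : List V) : TensorAlgebra k V :=
  (l.map (TensorAlgebra.ι k)).prod

section Aux

variable (k : Type*) [Field k] (V : Type*) [AddCommGroup V] [Module k V]

local notation "TA" => TensorAlgebra k V

lemma pg_nil : prodGen k V [] = 1 := rfl

lemma pg_cons (v : V) (l : List V) :
    prodGen k V (v :: l) = TensorAlgebra.ι k v * prodGen k V l := by
  simp [prodGen]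

lemma pg_append (l₁ l₂ : List V) :
    prodGen k V (l₁ ++ l₂) = prodGen k V l₁ * prodGen k V l₂ := by
  simp [prodGen]

lemma mem_span_pg (x : TA) :
    x ∈ Submodule.span k (Set.range (prodGen k V)) := by
  have key : ∀ a b : TA, a ∈ Submodule.span k (Set.range (prodGen k V)) →
      b ∈ Submodule.span k (Set.range (prodGen k V)) →
      a * b ∈ Submodule.span k (Set.range (prodGen k V)) := by
    intro a b ha hb
    induction ha using Submodule.span_induction with
    | mem x hx =>
      induction hb using Submodule.span_induction with
      | mem y hy =>
        obtain ⟨l₁, rfl⟩ := hx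
        obtain ⟨l₂, rfl⟩ := hy
        exact Submodule.subset_span ⟨l₁ ++ l₂, (pg_append k V l₁ l₂)⟩
      | zero => simp
      | add y z _ _ hy hz => rw [mul_add]; exact add_mem hy hz
      | smul c y _ hy => rw [mul_smul_comm]; exact Submodule.smul_mem _ _ hy
    | zero => simp
    | add y z _ _ hy hz => rw [add_mul]; exact add_mem hy hz
    | smul c y _ hy => rw [smul_mul_assoc]; exact Submodule.smul_mem _ _ hy
  induction x using TensorAlgebra.induction with
  | algebraMap r =>
    rw [Algebra.algebraMap_eq_smul_one]
    exact Submodule.smul_mem _ _ (Submodule.subset_span ⟨[], rfl⟩)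
  | ι v => exact Submodule.subset_span ⟨[v], by simp [prodGen]⟩
  | mul a b ha hb => exact key a b ha hb
  | add a b ha hb => exact add_mem ha hb

/-- Left multiplication on the first tensor factor. -/
noncomputable def myLsm (a : TA) :
    TA ⊗[k] (V ⊗[k] TA) →ₗ[k] TA ⊗[k] (V ⊗[k] TA) :=
  TensorProduct.map (LinearMap.mulLeft k a) LinearMap.id

lemma myLsm_tmul (a x : TA) (w : V ⊗[k] TA) :
    myLsm k V a (x ⊗ₜ[k] w) = (a * x) ⊗ₜ[k] w := rfl

lemma myLsm_add (a a' : TA) (w : TA ⊗[k] (V ⊗[k] TA)) :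
    myLsm k V (a + a') w = myLsm k V a w + myLsm k V a' w := by
  induction w using TensorProduct.induction_on with
  | zero => simp
  | tmul x y => simp [myLsm_tmul, add_mul, add_tmul]
  | add w₁ w₂ h₁ h₂ => simp only [map_add, h₁, h₂]; abel

lemma myLsm_smul (c : k) (a : TA) (w : TA ⊗[k] (V ⊗[k] TA)) :
    myLsm k V (c • a) w = c • myLsm k V a w := by
  induction w using TensorProduct.induction_on with
  | zero => simp
  | tmul x y => simp [myLsm_tmul, smul_mul_assoc, smul_tmul']
  | add w₁ w₂ h₁ h₂ => simp only [map_add, h₁, h₂, smul_add]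

lemma myLsm_myLsm (a b : TA) (w : TA ⊗[k] (V ⊗[k] TA)) :
    myLsm k V a (myLsm k V b w) = myLsm k V (a * b) w := by
  induction w using TensorProduct.induction_on with
  | zero => simp
  | tmul x y => simp [myLsm_tmul, mul_assoc]
  | add w₁ w₂ h₁ h₂ => simp only [map_add, h₁, h₂]

lemma myLsm_one (w : TA ⊗[k] (V ⊗[k] TA)) : myLsm k V 1 w = w := by
  simp [myLsm, LinearMap.mulLeft_one]

/-- The explicit bimodule map `a ⊗ v ⊗ b ↦ (a * ι v) ⊗ b - a ⊗ (ι v * b)`. -/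
noncomputable def Ibar : TA ⊗[k] (V ⊗[k] TA) →ₗ[k] TA ⊗[k] TA :=
  (TensorProduct.map (LinearMap.mul' k TA) LinearMap.id ∘ₗ
      (TensorProduct.assoc k TA TA TA).symm.toLinearMap
    - TensorProduct.map LinearMap.id (LinearMap.mul' k TA)) ∘ₗ
    TensorProduct.map LinearMap.id
      (TensorProduct.map (TensorAlgebra.ι k) LinearMap.id)

lemma Ibar_tmul (a b : TA) (v : V) :
    Ibar k V (a ⊗ₜ[k] (v ⊗ₜ[k] b))
      = (a * TensorAlgebra.ι k v) ⊗ₜ[k] b - a ⊗ₜ[k] (TensorAlgebra.ι k v * b) := by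
  simp [Ibar, TensorProduct.assoc_symm_tmul]

/-- extensionality via monomials -/
lemma ext1 {M : Type*} [AddCommGroup M] [Module k M]
    (f g : TA ⊗[k] (V ⊗[k] TA) →ₗ[k] M)
    (h : ∀ (l₁ l₂ : List V) (v : V),
      f (prodGen k V l₁ ⊗ₜ[k] (v ⊗ₜ[k] prodGen k V l₂))
        = g (prodGen k V l₁ ⊗ₜ[k] (v ⊗ₜ[k] prodGen k V l₂))) : f = g := by
  apply TensorProduct.ext'
  intro a w
  induction w using TensorProduct.induction_on with
  | zero => simp
  | add w₁ w₂ h₁ h₂ => rw [tmul_add, map_add, map_add, h₁, h₂]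
  | tmul v b =>
    have ha := mem_span_pg k V a
    induction ha using Submodule.span_induction with
    | mem x hx =>
      have hb := mem_span_pg k V b
      induction hb using Submodule.span_induction with
      | mem y hy =>
        obtain ⟨l₁, rfl⟩ := hx
        obtain ⟨l₂, rfl⟩ := hy
        exact h l₁ l₂ v
      | zero => simp
      | add y z _ _ hy hz =>
        rw [tmul_add, tmul_add, map_add, map_add, hy, hz]
      | smul c y _ hy =>
        rw [tmul_smul, tmul_smul, map_smul, map_smul, hy]
    | zero => simp
    | add y z _ _ hy hz => rw [add_tmul, map_add, map_add, hy, hz]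
    | smul c y _ hy => rw [← smul_tmul', map_smul, map_smul, hy]

/-- extensionality via monomials on the right factor only -/
lemma ext2 {M : Type*} [AddCommGroup M] [Module k M]
    (f g : TA ⊗[k] TA →ₗ[k] M)
    (h : ∀ (a : TA) (l : List V),
      f (a ⊗ₜ[k] prodGen k V l) = g (a ⊗ₜ[k] prodGen k V l)) : f = g := by
  apply TensorProduct.ext'
  intro a b
  have hb := mem_span_pg k V b
  induction hb using Submodule.span_induction with
  | mem y hy => obtain ⟨l, rfl⟩ := hy; exact h a l
  | zero => simp
  | add y z _ _ hy hz => rw [tmul_add, map_add, map_add, hy, hz]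
  | smul c y _ hy => rw [tmul_smul, map_smul, map_smul, hy]

end Aux
section Aux2
variable (k : Type*) [Field k] (V : Type*) [AddCommGroup V] [Module k V]
local notation "TA" => TensorAlgebra k V

/-- `J (a ⊗ b) = - a • d b` (left action on the first factor). -/
noncomputable def myJ (d : TA →ₗ[k] TA ⊗[k] (V ⊗[k] TA)) :
    TA ⊗[k] TA →ₗ[k] TA ⊗[k] (V ⊗[k] TA) :=
  TensorProduct.lift (LinearMap.mk₂ k (fun a b => - myLsm k V a (d b))
    (fun a a' b => by rw [myLsm_add]; abel)
    (fun c a b => by rw [myLsm_smul]; simp)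
    (fun a b b' => by rw [map_add, map_add]; abel)
    (fun c a b => by rw [map_smul, map_smul]; simp))

lemma myJ_tmul (d : TA →ₗ[k] TA ⊗[k] (V ⊗[k] TA)) (x y : TA) :
    myJ k V d (x ⊗ₜ[k] y) = - myLsm k V x (d y) := rfl

end Aux2

theorem stmt9
    (k : Type*) [Field k]
    (V : Type*) [AddCommGroup V] [Module k V]
    (I : TensorAlgebra k V ⊗[k] (V ⊗[k] TensorAlgebra k V) →ₗ[k]
      TensorAlgebra k V ⊗[k] TensorAlgebra k V)
    (hI : ∀ (l₁ l₂ : List V) (v : V),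
      I (prodGen k V l₁ ⊗ₜ[k] (v ⊗ₜ[k] prodGen k V l₂))
        = (prodGen k V l₁ * TensorAlgebra.ι k v) ⊗ₜ[k] prodGen k V l₂
          - prodGen k V l₁ ⊗ₜ[k] (TensorAlgebra.ι k v * prodGen k V l₂))
    (d : TensorAlgebra k V →ₗ[k]
      TensorAlgebra k V ⊗[k] (V ⊗[k] TensorAlgebra k V))
    (hd : ∀ l : List V,
      d (prodGen k V l)
        = ∑ i : Fin l.length,
            prodGen k V (l.take i) ⊗ₜ[k]
              (l.get i ⊗ₜ[k] prodGen k V (l.drop (i + 1)))) :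
    Function.Injective I ∧
    LinearMap.range I = LinearMap.ker (LinearMap.mul' k (TensorAlgebra k V)) ∧
    (∀ (x y a b : TensorAlgebra k V) (v : V),
      I ((x * a) ⊗ₜ[k] (v ⊗ₜ[k] (b * y)))
        = (x ⊗ₜ[k] (1 : TensorAlgebra k V)) * I (a ⊗ₜ[k] (v ⊗ₜ[k] b)) *
            ((1 : TensorAlgebra k V) ⊗ₜ[k] y)) ∧
    (∀ r : TensorAlgebra k V,
      I (d r) = r ⊗ₜ[k] (1 : TensorAlgebra k V)
        - (1 : TensorAlgebra k V) ⊗ₜ[k] r) := by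
  -- I coincides with the explicit map Ibar
  have hIeq : I = Ibar k V := by
    apply ext1
    intro l₁ l₂ v
    rw [hI, Ibar_tmul]
  subst hIeq
  -- recursion for d on cons
  have hdc : ∀ (v : V) (t : List V),
      d (prodGen k V (v :: t))
        = (1 : TensorAlgebra k V) ⊗ₜ[k] (v ⊗ₜ[k] prodGen k V t)
          + myLsm k V (TensorAlgebra.ι k v) (d (prodGen k V t)) := by
    intro v t
    rw [hd, hd]
    simp only [List.length_cons]
    rw [Fin.sum_univ_succ, map_sum]
    congr 1
  have hdnil : d (prodGen k V []) = 0 := by rw [hd]; simp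
  -- the key computation
  have hC : ∀ (l : List V) (a : TensorAlgebra k V),
      Ibar k V (myLsm k V a (d (prodGen k V l)))
        = (a * prodGen k V l) ⊗ₜ[k] (1 : TensorAlgebra k V)
          - a ⊗ₜ[k] prodGen k V l := by
    intro l
    induction l with
    | nil => intro a; rw [hdnil]; simp [pg_nil]
    | cons v t ih =>
      intro a
      rw [hdc, map_add, map_add, myLsm_tmul, mul_one, myLsm_myLsm,
        ih (a * TensorAlgebra.ι k v), Ibar_tmul, pg_cons, mul_assoc]
      abel
  -- left inverse: J ∘ Ibar = id
  have hJI : ∀ w, myJ k V d (Ibar k V w) = w := by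
    have : (myJ k V d).comp (Ibar k V) = LinearMap.id := by
      apply ext1
      intro l₁ l₂ v
      rw [LinearMap.comp_apply, Ibar_tmul, map_sub, myJ_tmul, myJ_tmul,
        ← pg_cons, hdc, map_add, myLsm_tmul, mul_one, myLsm_myLsm,
        LinearMap.id_apply]
      abel
    intro w
    exact DFunLike.congr_fun this w
  -- Ibar ∘ J = id - (μ x) ⊗ 1
  have hIJ : ∀ x, Ibar k V (myJ k V d x)
      = x - (LinearMap.mul' k (TensorAlgebra k V) x) ⊗ₜ[k] (1 : TensorAlgebra k V) := by
    have : (Ibar k V).comp (myJ k V d)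
        = LinearMap.id - ((TensorProduct.mk k (TensorAlgebra k V) (TensorAlgebra k V)).flip
            1).comp (LinearMap.mul' k (TensorAlgebra k V)) := by
      apply ext2
      intro a l
      rw [LinearMap.comp_apply, myJ_tmul, map_neg, hC l a]
      simp [LinearMap.mul'_apply]
    intro x
    have := DFunLike.congr_fun this x
    simpa using this
  -- μ ∘ Ibar = 0
  have hμI : ∀ w, LinearMap.mul' k (TensorAlgebra k V) (Ibar k V w) = 0 := by
    intro w
    induction w using TensorProduct.induction_on with
    | zero => simp
    | add w₁ w₂ h₁ h₂ => rw [map_add, map_add, h₁, h₂, add_zero]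
    | tmul a w' =>
      induction w' using TensorProduct.induction_on with
      | zero => simp
      | add w₁ w₂ h₁ h₂ => rw [tmul_add, map_add, map_add, h₁, h₂, add_zero]
      | tmul v b => simp [Ibar_tmul, LinearMap.mul'_apply, mul_assoc]
  refine ⟨?_, ?_, ?_, ?_⟩
  · exact Function.LeftInverse.injective hJI
  · ext x
    constructor
    · rintro ⟨w, rfl⟩
      exact LinearMap.mem_ker.mpr (hμI w)
    · intro hx
      rw [LinearMap.mem_ker] at hx
      exact ⟨myJ k V d x, by rw [hIJ, hx, zero_tmul, sub_zero]⟩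
  · intro x y a b v
    simp only [Ibar_tmul, mul_sub, sub_mul, Algebra.TensorProduct.tmul_mul_tmul,
      one_mul, mul_one, mul_assoc]
  · intro r
    have hr := mem_span_pg k V r
    induction hr using Submodule.span_induction with
    | mem y hy =>
      obtain ⟨l, rfl⟩ := hy
      have := hC l 1
      rw [myLsm_one, one_mul] at this
      exact this
    | zero => simp
    | add y z _ _ hy hz =>
      rw [map_add, map_add, hy, hz, add_tmul, tmul_add]
      abel
    | smul c y _ hy =>
      rw [map_smul, map_smul, hy, smul_sub, ← smul_tmul', tmul_smul]
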